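/- For a binomial line process with n_B lines whose generating points (θ_i, r_i) are independently uniform on [0,π) × [−R_g, R_g], the expected total length of line segments per unit area (line length density) at distance r from the origin equals n_B/(2R_g) if r ≤ R_g, and equals (n_B/(π R_g))·arcsin(R_g/r) if r > R_g. -/

import Mathlib

/-!
A line at signed distance `r` from the origin meets the disk of radius `t` in a chord of
length `2 √(t² - r²)`. Integrating over the band `|r| < Rg` gives the expected line length in
the disk in closed form: `π t²` for `t ≤ Rg`, and `2 (Rg √(t² - Rg²) + t² arcsin (Rg / t))`
for `t ≥ Rg`.
The annulus quotient tends to the right derivative of this function of `t` divided by `2 π t`.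
The derivative is `4 t arcsin (min 1 (Rg / t))`, continuous across `t = Rg`, because the two
`√`-terms in the derivative of the outer formula cancel.
-/

open MeasureTheory Real Filter

/-- Expected total length of the lines of a binomial line process (with `nB` lines whose
generating points (θ,r) are independently uniform on [0,π) × [−Rg,Rg]) inside the disk of
radius `t` centered at the origin: a line with signed distance `r` from the origin meets
this disk in a chord of length 2√(t² − r²) when |r| < t. -/
noncomputable def blpDiskLength (nB Rg t : ℝ) : ℝ :=
  nB * (1 / (2 * Rg)) *
    ∫ r in Set.Ioo (-Rg) Rg, (if |r| < t then 2 * Real.sqrt (t ^ 2 - r ^ 2) else 0)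

theorem sqrt_one_sub_div_sq {a t : ℝ} (ht : 0 < t) :
    √(1 - (a / t) ^ 2) = √(t ^ 2 - a ^ 2) / t := by
  rw [show 1 - (a / t) ^ 2 = (t ^ 2 - a ^ 2) / t ^ 2 by field_simp, Real.sqrt_div',
    Real.sqrt_sq ht.le]
  positivity

theorem hasDerivAt_mul_sqrt_add_sq_mul_arcsin {t x : ℝ} (ht : 0 < t)
    (hx : x ∈ Set.Ioo (-t) t) :
    HasDerivAt (fun x => x * √(t ^ 2 - x ^ 2) + t ^ 2 * arcsin (x / t))
      (2 * √(t ^ 2 - x ^ 2)) x := by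
  obtain ⟨hxl, hxr⟩ := hx
  have hpos : 0 < t ^ 2 - x ^ 2 := by nlinarith
  have hsqrt :
      HasDerivAt (fun x => √(t ^ 2 - x ^ 2)) (-(2 * x) / (2 * √(t ^ 2 - x ^ 2))) x := by
    simpa using ((hasDerivAt_pow 2 x).const_sub (t ^ 2)).sqrt hpos.ne'
  have harcsin : HasDerivAt (fun x => arcsin (x / t)) (1 / √(1 - (x / t) ^ 2) * (1 / t)) x :=
    (hasDerivAt_arcsin (by rw [ne_eq, div_eq_iff ht.ne']; linarith)
      (by rw [ne_eq, div_eq_iff ht.ne']; linarith)).comp x ((hasDerivAt_id x).div_const t)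
  refine (((hasDerivAt_id x).mul hsqrt).add (harcsin.const_mul (t ^ 2))).congr_deriv ?_
  have hs : √(t ^ 2 - x ^ 2) ≠ 0 := by positivity
  rw [sqrt_one_sub_div_sq ht]
  field_simp
  simp only [id]
  linear_combination (-1 : ℝ) * Real.sq_sqrt hpos.le

theorem integral_two_mul_sqrt_sq_sub_sq {t a : ℝ} (ht : 0 < t) (ha : 0 ≤ a) (hat : a ≤ t) :
    ∫ x in (-a)..a, 2 * √(t ^ 2 - x ^ 2)
      = 2 * (a * √(t ^ 2 - a ^ 2) + t ^ 2 * arcsin (a / t)) := by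
  have hcont : ContinuousOn (fun x => x * √(t ^ 2 - x ^ 2) + t ^ 2 * arcsin (x / t))
      (Set.Icc (-a) a) := by fun_prop
  rw [intervalIntegral.integral_eq_sub_of_hasDerivAt_of_le (by linarith) hcont
    (fun x hx => hasDerivAt_mul_sqrt_add_sq_mul_arcsin ht
      ⟨by linarith [hx.1], hx.2.trans_le hat⟩)
    ((by fun_prop : Continuous fun x => 2 * √(t ^ 2 - x ^ 2)).intervalIntegrable _ _)]
  rw [neg_div, arcsin_neg, neg_sq]
  ring

theorem setIntegral_chord_Ioo {Rg t : ℝ} (hRg : 0 < Rg) (ht : 0 < t) :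
    ∫ r in Set.Ioo (-Rg) Rg, (if |r| < t then 2 * √(t ^ 2 - r ^ 2) else 0)
      = 2 * (min t Rg * √(t ^ 2 - min t Rg ^ 2) + t ^ 2 * arcsin (min t Rg / t)) := by
  have hchord : (fun r : ℝ => if |r| < t then 2 * √(t ^ 2 - r ^ 2) else 0)
      = (Set.Ioo (-t) t).indicator (fun r => 2 * √(t ^ 2 - r ^ 2)) := by
    ext r
    simp only [Set.indicator_apply, Set.mem_Ioo, abs_lt]
  have hinter : Set.Ioo (-Rg) Rg ∩ Set.Ioo (-t) t = Set.Ioo (-min t Rg) (min t Rg) := by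
    rw [Set.Ioo_inter_Ioo, neg_inf, sup_comm, inf_comm]
  have hm : 0 < min t Rg := lt_min ht hRg
  rw [hchord, setIntegral_indicator measurableSet_Ioo, hinter, ← integral_Ioc_eq_integral_Ioo,
    ← intervalIntegral.integral_of_le (by linarith),
    integral_two_mul_sqrt_sq_sub_sq ht hm.le (min_le_left t Rg)]

theorem blpDiskLength_of_le {nB Rg t : ℝ} (hRg : 0 < Rg) (ht : 0 < t) (htRg : t ≤ Rg) :
    blpDiskLength nB Rg t = nB * (1 / (2 * Rg)) * (π * t ^ 2) := by
  rw [blpDiskLength, setIntegral_chord_Ioo hRg ht, min_eq_left htRg, sub_self, Real.sqrt_zero,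
    div_self ht.ne', arcsin_one]
  ring

noncomputable def bandChordIntegral (Rg t : ℝ) : ℝ :=
  2 * (Rg * √(t ^ 2 - Rg ^ 2) + t ^ 2 * arcsin (Rg / t))

theorem blpDiskLength_of_ge {nB Rg t : ℝ} (hRg : 0 < Rg) (hRgt : Rg ≤ t) :
    blpDiskLength nB Rg t = nB * (1 / (2 * Rg)) * bandChordIntegral Rg t := by
  rw [blpDiskLength, setIntegral_chord_Ioo hRg (hRg.trans_le hRgt), min_eq_right hRgt,
    bandChordIntegral]

theorem hasDerivAt_bandChordIntegral {Rg t : ℝ} (hRg : 0 ≤ Rg) (hRgt : Rg < t) :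
    HasDerivAt (bandChordIntegral Rg) (4 * t * arcsin (Rg / t)) t := by
  have ht : 0 < t := hRg.trans_lt hRgt
  have hpos : 0 < t ^ 2 - Rg ^ 2 := by nlinarith
  have hsqrt : HasDerivAt (fun t => √(t ^ 2 - Rg ^ 2)) (2 * t / (2 * √(t ^ 2 - Rg ^ 2))) t := by
    simpa using ((hasDerivAt_pow 2 t).sub_const (Rg ^ 2)).sqrt hpos.ne'
  have hdiv : HasDerivAt (fun t => Rg / t) (Rg * -(t ^ 2)⁻¹) t := by
    simpa [div_eq_mul_inv] using (hasDerivAt_inv ht.ne').const_mul Rg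
  have harcsin : HasDerivAt (fun t => arcsin (Rg / t))
      (1 / √(1 - (Rg / t) ^ 2) * (Rg * -(t ^ 2)⁻¹)) t :=
    (hasDerivAt_arcsin (by rw [ne_eq, div_eq_iff ht.ne']; nlinarith)
      (by rw [ne_eq, div_eq_iff ht.ne']; linarith)).comp t hdiv
  refine (((hsqrt.const_mul Rg).add ((hasDerivAt_pow 2 t).mul harcsin)).const_mul 2).congr_deriv
    ?_
  have hs : √(t ^ 2 - Rg ^ 2) ≠ 0 := by positivity
  rw [sqrt_one_sub_div_sq ht]
  field_simp
  ring

theorem continuousAt_bandChordIntegral {Rg t : ℝ} (ht : t ≠ 0) :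
    ContinuousAt (bandChordIntegral Rg) t := by
  unfold bandChordIntegral
  fun_prop (disch := exact ht)

-- At `t = Rg` the outer formula cannot be differentiated term by term (`√` has infinite slope at
-- `0`), so the one-sided derivative is obtained as the limit of the derivative.
theorem hasDerivWithinAt_bandChordIntegral_Ioi {Rg t : ℝ} (hRg : 0 < Rg) (hRgt : Rg ≤ t) :
    HasDerivWithinAt (bandChordIntegral Rg) (4 * t * arcsin (Rg / t)) (Set.Ioi t) t := by
  have ht : 0 < t := hRg.trans_le hRgt
  have hderiv :
      ∀ x ∈ Set.Ioi t, HasDerivAt (bandChordIntegral Rg) (4 * x * arcsin (Rg / x)) x :=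
    fun x hx => hasDerivAt_bandChordIntegral hRg.le (hRgt.trans_lt hx)
  refine (hasDerivWithinAt_Ici_of_tendsto_deriv (fun x hx => (hderiv x hx).differentiableAt
    |>.differentiableWithinAt) (continuousAt_bandChordIntegral ht.ne').continuousWithinAt
    self_mem_nhdsWithin ?_).mono Set.Ioi_subset_Ici_self
  have hcont : ContinuousAt (fun x => 4 * x * arcsin (Rg / x)) t := by
    fun_prop (disch := exact ht.ne')
  exact hcont.continuousWithinAt.tendsto.congr' <|
    eventually_nhdsWithin_of_forall fun x hx => (hderiv x hx).deriv.symm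

theorem hasDerivWithinAt_blpDiskLength_Ioi (nB : ℝ) {Rg r : ℝ} (hRg : 0 < Rg) (hr : 0 < r) :
    HasDerivWithinAt (blpDiskLength nB Rg)
      (nB * (1 / (2 * Rg)) * (4 * r * arcsin (min 1 (Rg / r)))) (Set.Ioi r) r := by
  rcases lt_or_ge r Rg with hrRg | hRgr
  · have hdisk : blpDiskLength nB Rg =ᶠ[nhds r] fun t => nB * (1 / (2 * Rg)) * (π * t ^ 2) :=
      eventually_of_mem (Ioo_mem_nhds hr hrRg) fun t ht => blpDiskLength_of_le hRg ht.1 ht.2.le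
    rw [min_eq_left ((one_le_div hr).2 hrRg.le), arcsin_one]
    refine (((hasDerivAt_pow 2 r).const_mul π).const_mul _).congr_of_eventuallyEq hdisk
      |>.congr_deriv (by ring) |>.hasDerivWithinAt
  · rw [min_eq_right ((div_le_one hr).2 hRgr)]
    exact ((hasDerivWithinAt_bandChordIntegral_Ioi hRg hRgr).const_mul _).congr
      (fun t ht => blpDiskLength_of_ge hRg (hRgr.trans ht.le)) (blpDiskLength_of_ge hRg hRgr)

theorem tendsto_div_annulus_area_of_hasDerivWithinAt {F : ℝ → ℝ} {F' r : ℝ}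
    (hF : HasDerivWithinAt F F' (Set.Ioi r) r) (hr : r ≠ 0) :
    Tendsto (fun ε => (F (r + ε) - F r) / (π * ((r + ε) ^ 2 - r ^ 2)))
      (nhdsWithin 0 (Set.Ioi 0)) (nhds (F' / (π * (2 * r)))) := by
  have hshift : Tendsto (fun ε => r + ε) (nhdsWithin 0 (Set.Ioi 0)) (nhdsWithin r (Set.Ioi r)) :=
    tendsto_nhdsWithin_of_tendsto_nhds_of_eventually_within _
      ((continuous_const_add r).tendsto' 0 r (add_zero r) |>.mono_left nhdsWithin_le_nhds)
      (eventually_nhdsWithin_of_forall fun ε (hε : 0 < ε) => lt_add_of_pos_right r hε)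
  have hslope := ((hasDerivWithinAt_iff_tendsto_slope' (lt_irrefl r)).1 hF).comp hshift
  have harea : Tendsto (fun ε => π * (2 * r + ε)) (nhdsWithin 0 (Set.Ioi 0))
      (nhds (π * (2 * r))) := by
    simpa using ((continuous_const_add (2 * r)).const_mul π |>.tendsto 0).mono_left
      nhdsWithin_le_nhds
  refine (hslope.div harea (by positivity)).congr' ?_
  filter_upwards [self_mem_nhdsWithin] with ε (hε : 0 < ε)
  rw [Pi.div_apply, Function.comp_apply, slope_def_field, add_sub_cancel_left,
    show (r + ε) ^ 2 - r ^ 2 = ε * (2 * r + ε) by ring]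
  field_simp

theorem stmt_7_general (nB : ℕ) (Rg r : ℝ) (hRg : 0 < Rg) (hr : 0 < r) :
    Tendsto
      (fun ε : ℝ =>
        (blpDiskLength nB Rg (r + ε) - blpDiskLength nB Rg r) / (π * ((r + ε) ^ 2 - r ^ 2)))
      (nhdsWithin 0 (Set.Ioi 0))
      (nhds (if r ≤ Rg then (nB : ℝ) / (2 * Rg)
             else (nB : ℝ) / (π * Rg) * Real.arcsin (Rg / r))) := by
  convert tendsto_div_annulus_area_of_hasDerivWithinAt
    (hasDerivWithinAt_blpDiskLength_Ioi nB hRg hr) hr.ne' using 2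
  split_ifs with hrRg
  · rw [min_eq_left ((one_le_div hr).2 hrRg), arcsin_one]
    field_simp
    ring
  · rw [min_eq_right ((div_le_one hr).2 (not_le.1 hrRg).le)]
    field_simp
    ring

/-- The line length density of the binomial line process at distance r from the origin —
the limit of expected line length in a thin annulus of radii (r, r+ε) divided by the
annulus area — equals nB/(2Rg) for r ≤ Rg and (nB/(πRg))·arcsin(Rg/r) for r > Rg. -/
theorem stmt_7 (nB : ℕ) (Rg r : ℝ) (hnB : 0 < nB) (hRg : 0 < Rg) (hr : 0 < r) :
    Tendsto
      (fun ε : ℝ =>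
        (blpDiskLength nB Rg (r + ε) - blpDiskLength nB Rg r) / (π * ((r + ε) ^ 2 - r ^ 2)))
      (nhdsWithin 0 (Set.Ioi 0))
      (nhds (if r ≤ Rg then (nB : ℝ) / (2 * Rg)
             else (nB : ℝ) / (π * Rg) * Real.arcsin (Rg / r))) :=
  stmt_7_general nB Rg r hRg hr
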